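/- Let the subgroup H of (S¹)^{h+1} be the kernel of the homomorphism λ ↦ ∏ⱼ λⱼ^{ξⱼ} for some ξ ∈ ℤ^{h+1}, ξ ≠ 0. A monomial Q(z) = ∏ᵢ zᵢ^{jᵢ} z̄ᵢ^{kᵢ} on ℂ^{h+1} is invariant under the natural H-action if and only if the vector (j₀−k₀, …, j_h−k_h) is an integer multiple of ξ. -/

import Mathlib

/-!
Writing `η = j - k`, the monomial transforms under `l` by the character `∏ lᵢ ^ ηᵢ`, so
invariance says `ker χ_ξ ≤ ker χ_η` for the characters `χ_c(l) = ∏ lᵢ ^ cᵢ` of the torus.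
Pulling back along `θ ↦ (exp (i θⱼ))ⱼ`, the linear form `⟨η, ·⟩` takes values in `2πℤ` on the
subspace `⟨ξ, ·⟩ = 0`, hence vanishes there, so `η = r ξ` for a real `r`; evaluating at a
`θ` with `⟨ξ, θ⟩ = 2π` shows that `r` is an integer.
-/

open ComplexConjugate

theorem LinearMap.ker_le_ker_of_forall_eq_int_mul {E : Type*} [AddCommGroup E] [Module ℝ E]
    (f g : E →ₗ[ℝ] ℝ) (a : ℝ) (h : ∀ x, f x = 0 → ∃ n : ℤ, g x = n * a) :
    ker f ≤ ker g := by
  intro x hx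
  by_contra hgx
  rw [mem_ker] at hx hgx
  rcases eq_or_ne a 0 with rfl | ha
  · obtain ⟨n, hn⟩ := h x hx
    simp_all
  -- `g` takes the value `a / 2` on the ray through `x`, which lies in `ker f`
  obtain ⟨n, hn⟩ := h ((a / 2 / g x) • x) (by simp [hx])
  rw [map_smul, smul_eq_mul, div_mul_cancel₀ _ hgx] at hn
  have : (n : ℝ) * 2 = 1 := mul_right_cancel₀ ha (by linarith)
  have : (n : ℤ) * 2 = 1 := by exact_mod_cast this
  omega

theorem LinearMap.exists_eq_smul_of_ker_le_ker {𝕜 E : Type*} [Field 𝕜] [AddCommGroup E]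
    [Module 𝕜 E] {f g : E →ₗ[𝕜] 𝕜} (h : ker f ≤ ker g) : ∃ r : 𝕜, g = r • f := by
  have hspan := mem_span_of_iInf_ker_le_ker (L := fun _ : Unit => f) (by simpa using h)
  rw [Set.range_const, Submodule.mem_span_singleton] at hspan
  obtain ⟨r, hr⟩ := hspan
  exact ⟨r, hr.symm⟩

variable {ι : Type*} [Fintype ι]

noncomputable def torusChar (ξ : ι → ℤ) : (ι → Circle) →* Circle where
  toFun l := ∏ i, l i ^ ξ i
  map_one' := by simp
  map_mul' l l' := by simp only [Pi.mul_apply, mul_zpow, Finset.prod_mul_distrib]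

theorem torusChar_apply (ξ : ι → ℤ) (l : ι → Circle) : torusChar ξ l = ∏ i, l i ^ ξ i := rfl

theorem torusChar_zsmul (m : ℤ) (ξ : ι → ℤ) : torusChar (m • ξ) = torusChar ξ ^ m := by
  ext1 l
  simp only [torusChar_apply, MonoidHom.zpow_apply, ← Finset.prod_zpow, ← zpow_mul,
    Pi.smul_apply, smul_eq_mul, mul_comm]

theorem torusChar_exp (ξ : ι → ℤ) (θ : ι → ℝ) :
    torusChar ξ (fun i => Circle.exp (θ i))
      = Circle.exp (Fintype.linearCombination ℝ (fun i => (ξ i : ℝ)) θ) := by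
  simp only [torusChar_apply, Fintype.linearCombination_apply, smul_eq_mul, mul_comm (θ _),
    ← Circle.exp_intCast_mul]
  exact (map_sum Circle.expHom _ _).symm

theorem torusChar_ker_le_ker_iff {ξ η : ι → ℤ} (hξ : ξ ≠ 0) :
    (torusChar ξ).ker ≤ (torusChar η).ker ↔ ∃ m : ℤ, η = m • ξ := by
  classical
  refine ⟨fun h => ?_, fun ⟨m, hm⟩ l hl => ?_⟩
  swap
  · rw [MonoidHom.mem_ker] at hl ⊢
    rw [hm, torusChar_zsmul, MonoidHom.zpow_apply, hl, one_zpow]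
  set F := fun c : ι → ℤ => Fintype.linearCombination ℝ (fun i => (c i : ℝ))
  have hF : ∀ c i x, F c (Pi.single i x) = x * c i := fun c i x => by
    simp [F, Fintype.linearCombination_apply_single]
  have hperiod : ∀ θ,
      (∃ p : ℤ, F ξ θ = p * (2 * Real.pi)) → ∃ m : ℤ, F η θ = m * (2 * Real.pi) := by
    intro θ hθ
    have := h (x := fun i => Circle.exp (θ i))
    simp only [MonoidHom.mem_ker, torusChar_exp, Circle.exp_eq_one] at this
    exact this hθ
  obtain ⟨r, hr⟩ := LinearMap.exists_eq_smul_of_ker_le_ker <|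
    LinearMap.ker_le_ker_of_forall_eq_int_mul (F ξ) (F η) _
      fun θ hθ => hperiod θ ⟨0, by simp [hθ]⟩
  obtain ⟨i₀, hi₀⟩ := Function.ne_iff.mp hξ
  have hθ₀ : F ξ (Pi.single i₀ (2 * Real.pi / ξ i₀)) = 1 * (2 * Real.pi) := by
    rw [hF, one_mul, div_mul_cancel₀ _ (by exact_mod_cast hi₀)]
  obtain ⟨m, hm⟩ := hperiod _ ⟨1, by exact_mod_cast hθ₀⟩
  have hrm : r = m := by
    have := LinearMap.congr_fun hr (Pi.single i₀ (2 * Real.pi / ξ i₀))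
    rw [LinearMap.smul_apply, hθ₀, hm, smul_eq_mul, one_mul] at this
    exact (mul_right_cancel₀ Real.two_pi_pos.ne' this).symm
  refine ⟨m, funext fun i => ?_⟩
  have := LinearMap.congr_fun hr (Pi.single i 1)
  rw [LinearMap.smul_apply, hF, hF, hrm, one_mul, one_mul, smul_eq_mul] at this
  rw [Pi.smul_apply, smul_eq_mul]
  exact_mod_cast this

theorem Circle.coe_prod (l : ι → Circle) : ((∏ i, l i : Circle) : ℂ) = ∏ i, (l i : ℂ) :=
  map_prod Circle.coeHom l Finset.univ

theorem Circle.mul_pow_mul_conj_pow (u : Circle) (z : ℂ) (j k : ℕ) :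
    ((u : ℂ) * z) ^ j * conj ((u : ℂ) * z) ^ k
      = ((u ^ ((j : ℤ) - k) : Circle) : ℂ) * (z ^ j * conj z ^ k) := by
  rw [map_mul, ← Circle.coe_inv_eq_conj, Circle.coe_zpow, zpow_sub₀ (Circle.coe_ne_zero u),
    Circle.coe_inv, zpow_natCast, zpow_natCast, mul_pow, mul_pow, inv_pow]
  ring

theorem Circle.prod_mul_pow_mul_conj_pow (l : ι → Circle) (z : ι → ℂ) (j k : ι → ℕ) :
    ∏ i, ((l i : ℂ) * z i) ^ j i * conj ((l i : ℂ) * z i) ^ k i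
      = ((∏ i, l i ^ ((j i : ℤ) - k i) : Circle) : ℂ) * ∏ i, z i ^ j i * conj (z i) ^ k i := by
  simp only [Circle.mul_pow_mul_conj_pow, Finset.prod_mul_distrib, Circle.coe_prod]

theorem forall_prod_pow_mul_conj_pow_eq_iff (l : ι → Circle) (j k : ι → ℕ) :
    (∀ z : ι → ℂ, ∏ i, ((l i : ℂ) * z i) ^ j i * conj ((l i : ℂ) * z i) ^ k i
        = ∏ i, z i ^ j i * conj (z i) ^ k i) ↔ ∏ i, l i ^ ((j i : ℤ) - k i) = 1 := by
  simp only [Circle.prod_mul_pow_mul_conj_pow]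
  refine ⟨fun h => ?_, fun h z => by rw [h, Circle.coe_one, one_mul]⟩
  simpa [Circle.coe_eq_one] using h 1

/-- let `H ⊆ (S¹)^{h+1}` be the kernel of `λ ↦ ∏ⱼ λⱼ^{ξⱼ}` for a non-zero
`ξ ∈ ℤ^{h+1}`. The monomial `Q(z) = ∏ᵢ zᵢ^{jᵢ} z̄ᵢ^{kᵢ}` is invariant under the natural
coordinatewise `H`-action on `ℂ^{h+1}` if and only if `(j₀−k₀,…,j_h−k_h)` is an integer
multiple of `ξ`. -/
theorem monomial_invariant_iff_multiple
    (h : ℕ) (ξ : Fin (h + 1) → ℤ) (hξ : ξ ≠ 0)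
    (H : Subgroup (Fin (h + 1) → Circle))
    (hker : ∀ l : Fin (h + 1) → Circle, l ∈ H ↔ ∏ i, l i ^ ξ i = 1)
    (j k : Fin (h + 1) → ℕ) :
    (∀ l ∈ H, ∀ z : Fin (h + 1) → ℂ,
        (∏ i, ((l i : ℂ) * z i) ^ j i * (starRingEnd ℂ) ((l i : ℂ) * z i) ^ k i) =
          ∏ i, (z i) ^ j i * (starRingEnd ℂ) (z i) ^ k i) ↔
      ∃ m : ℤ, ∀ i, (j i : ℤ) - (k i : ℤ) = m * ξ i := by
  obtain rfl : H = (torusChar ξ).ker := SetLike.ext hker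
  simp only [forall_prod_pow_mul_conj_pow_eq_iff, ← torusChar_apply, ← MonoidHom.mem_ker]
  rw [← SetLike.le_def, torusChar_ker_le_ker_iff hξ]
  simp only [funext_iff, Pi.smul_apply, smul_eq_mul]
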